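/- arXiv:2105.06202 — 5 statements merged into one kernel-verified Lean document; each statement's English description precedes it below -/
import Mathlib

section
/- Let 𝔄 = (Q, Σ, δ, q₀, F) be a DFA with finite state set Q, and let Ã be its minimal DFA with transition functions δ̃_w. Then the transition monoid M(Ã) = {δ̃_w : w ∈ Σ*} contains a nontrivial group if and only if there exist a word u ∈ Σ*, a reachable state q ∈ Q^r, and a number k with 1 ≤ k ≤ |Q| such that q ≁ δ_u(q) and δ_{u^k}(q) = q. -/
/-- Extended transition function of a DFA: `run δ w q` is the state reached from `q`
after reading the word `w`. -/
def run {Q A : Type} (δ : Q → A → Q) (w : List A) (q : Q) : Q := w.foldl δ q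

/-- A state `q` is reachable from the initial state `q0`. -/
def Reach {Q A : Type} (δ : Q → A → Q) (q0 : Q) (q : Q) : Prop :=
  ∃ w : List A, run δ w q0 = q

/-- Myhill–Nerode style equivalence of states: `q ∼ q'` iff every word leads from `q`
into `F` exactly when it leads from `q'` into `F`. -/
def StEq {Q A : Type} (δ : Q → A → Q) (F : Set Q) (q q' : Q) : Prop :=
  ∀ w : List A, (run δ w q ∈ F ↔ run δ w q' ∈ F)

theorem run_append {Q A : Type} (δ : Q → A → Q) (w v : List A) (q : Q) :
    run δ (w ++ v) q = run δ v (run δ w q) := by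
  simp [run, List.foldl_append]

/-- The setoid of reachable states modulo `∼`. -/
def minSetoid {Q A : Type} (δ : Q → A → Q) (q0 : Q) (F : Set Q) :
    Setoid {q : Q // Reach δ q0 q} where
  r a b := StEq δ F a.1 b.1
  iseqv := ⟨fun _ _ => Iff.rfl, fun h w => (h w).symm, fun h1 h2 w => (h1 w).trans (h2 w)⟩

/-- The states of the minimal DFA: `∼`-classes of reachable states. -/
abbrev MinState {Q A : Type} (δ : Q → A → Q) (q0 : Q) (F : Set Q) :=
  Quotient (minSetoid δ q0 F)

theorem reach_run {Q A : Type} (δ : Q → A → Q) (q0 : Q) (q : Q)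
    (h : Reach δ q0 q) (w : List A) : Reach δ q0 (run δ w q) := by
  obtain ⟨w', hw'⟩ := h
  exact ⟨w' ++ w, by rw [run_append, hw']⟩

/-- The transition function `δ̃_w` of the minimal DFA. -/
def minDelta {Q A : Type} (δ : Q → A → Q) (q0 : Q) (F : Set Q) (w : List A) :
    MinState δ q0 F → MinState δ q0 F :=
  Quotient.map (fun a => ⟨run δ w a.1, reach_run δ q0 a.1 a.2 w⟩)
    (by
      intro a b h
      intro v
      show run δ v (run δ w a.1) ∈ F ↔ run δ v (run δ w b.1) ∈ F
      rw [← run_append, ← run_append]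
      exact h (w ++ v))

/-- `wpow u k` is the word `u^k`, i.e. `u` concatenated with itself `k` times. -/
def wpow {A : Type} (u : List A) (k : ℕ) : List A := (List.replicate k u).flatten

-- =============== aux lemmas ===============

section Aux
variable {Q A : Type} (δ : Q → A → Q) (q0 : Q) (F : Set Q)

theorem stEq_symm {q q' : Q} (h : StEq δ F q q') : StEq δ F q' q := fun w => (h w).symm
theorem stEq_trans {a b c : Q} (h1 : StEq δ F a b) (h2 : StEq δ F b c) : StEq δ F a c :=
  fun w => (h1 w).trans (h2 w)
theorem stEq_run {q q' : Q} (h : StEq δ F q q') (w : List A) :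
    StEq δ F (run δ w q) (run δ w q') := by
  intro v
  rw [← run_append, ← run_append]
  exact h (w ++ v)

theorem wpow_succ {u : List A} (n : ℕ) : wpow u (n + 1) = u ++ wpow u n := by
  simp [wpow, List.replicate_succ]

theorem run_wpow (u : List A) (n : ℕ) (q : Q) :
    run δ (wpow u n) q = (run δ u)^[n] q := by
  induction n generalizing q with
  | zero => simp [wpow, run]
  | succ n ih =>
    rw [wpow_succ, run_append, ih, Function.iterate_succ_apply]

theorem minDelta_mk (w : List A) (q : Q) (hq : Reach δ q0 q) :
    minDelta δ q0 F w ⟦⟨q, hq⟩⟧ = ⟦⟨run δ w q, reach_run δ q0 q hq w⟩⟧ := rfl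

theorem mk_eq_iff {q q' : Q} (hq : Reach δ q0 q) (hq' : Reach δ q0 q') :
    (⟦⟨q, hq⟩⟧ : MinState δ q0 F) = ⟦⟨q', hq'⟩⟧ ↔ StEq δ F q q' := by
  rw [Quotient.eq]
  rfl

theorem minDelta_wpow (u : List A) (n : ℕ) :
    minDelta δ q0 F (wpow u n) = (minDelta δ q0 F u)^[n] := by
  induction n with
  | zero =>
    funext t
    induction t using Quotient.inductionOn with
    | h a =>
      rcases a with ⟨q, hq⟩
      have hrq : run δ (wpow u 0) q = q := by simp [wpow, run]
      rw [Function.iterate_zero, id_eq, minDelta_mk, (mk_eq_iff δ q0 F _ _)]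
      rw [hrq]
      exact fun w => Iff.rfl
  | succ n ih =>
    funext t
    induction t using Quotient.inductionOn with
    | h a =>
      rw [Function.iterate_succ_apply]
      rw [← ih]
      rcases a with ⟨q, hq⟩
      rw [minDelta_mk, minDelta_mk, minDelta_mk]
      simp only [wpow_succ, run_append]

end Aux

section Main
variable {Q A : Type} [Fintype Q] [Fintype A] (δ : Q → A → Q) (q0 : Q) (F : Set Q)

theorem stmt0_mpr (u : List A) (q : Q) (k : ℕ) (hq : Reach δ q0 q)
    (hk1 : 1 ≤ k) (hne : ¬ StEq δ F q (run δ u q)) (hfix : run δ (wpow u k) q = q) :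
    (∃ (H : Type) (_ : Group H), Nontrivial H ∧
      ∃ φ : H → (MinState δ q0 F → MinState δ q0 F),
        Function.Injective φ ∧
        (∀ g h : H, φ (g * h) = φ g ∘ φ h) ∧
        (∀ g : H, ∃ w : List A, φ g = minDelta δ q0 F w)) := by
  classical
  set f : MinState δ q0 F → MinState δ q0 F := minDelta δ q0 F u with hf
  set t : MinState δ q0 F := ⟦⟨q, hq⟩⟧ with htdef
  have ht : f t ≠ t := by
    intro h
    rw [hf, htdef, minDelta_mk, mk_eq_iff] at h
    exact hne (stEq_symm δ F h)
  have htk : f^[k] t = t := by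
    rw [← minDelta_wpow, htdef, minDelta_mk]
    exact congrArg _ (Subtype.ext hfix)
  -- find exponents where iterates repeat
  have hFin : Finite (MinState δ q0 F → MinState δ q0 F) := inferInstance
  obtain ⟨i0, j0, hne0, heq0⟩ := Finite.exists_ne_map_eq_of_infinite (fun n : ℕ => f^[n])
  obtain ⟨i, j, hij, heqij⟩ : ∃ i j : ℕ, i < j ∧ f^[i] = f^[j] := by
    rcases hne0.lt_or_gt with h | h
    · exact ⟨i0, j0, h, heq0⟩
    · exact ⟨j0, i0, h, heq0.symm⟩
  set r := j - i with hrdef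
  have hr1 : 1 ≤ r := by omega
  have hstep : ∀ s, i ≤ s → f^[s + r] = f^[s] := by
    intro s hs
    have h1 : s + r = (s - i) + j := by omega
    have h2 : s = (s - i) + i := by omega
    rw [h1, Function.iterate_add, ← heqij, ← Function.iterate_add, ← h2]
  have hmul : ∀ c s, i ≤ s → f^[s + c * r] = f^[s] := by
    intro c
    induction c with
    | zero => intro s _; simp
    | succ c ih =>
      intro s hs
      have h1 : s + (c + 1) * r = (s + r) + c * r := by ring
      rw [h1, ih (s + r) (by omega), hstep s hs]
  set N := r * (i + 1) with hNdef
  have hNi' : 1 * (i + 1) ≤ r * (i + 1) := Nat.mul_le_mul_right (i + 1) hr1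
  rw [one_mul, ← hNdef] at hNi'
  have hNi : i ≤ N := by omega
  have hN1 : 1 ≤ N := by omega
  have hNN : f^[N + N] = f^[N] := by
    have : N + N = N + (i + 1) * r := by rw [hNdef]; ring
    rw [this, hmul (i + 1) N hNi]
  -- minimal period p
  have hPex : ∃ p, 1 ≤ p ∧ f^[N + p] = f^[N] := ⟨N, hN1, hNN⟩
  set p := Nat.find hPex with hpdef
  obtain ⟨hp1, hpN⟩ := Nat.find_spec hPex
  have hpmin : ∀ c, 1 ≤ c → c < p → f^[N + c] ≠ f^[N] := by
    intro c hc1 hcp hc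
    exact Nat.find_min hPex hcp ⟨hc1, hc⟩
  have hred : ∀ m, f^[N + m] = f^[N + m % p] := by
    intro m
    induction m using Nat.strong_induction_on with
    | _ m ih =>
      by_cases h : m < p
      · rw [Nat.mod_eq_of_lt h]
      · push_neg at h
        have h1 : N + m = (m - p) + (N + p) := by omega
        have h2 : N + (m - p) = (m - p) + N := by omega
        have h3 : (m - p) % p = m % p := by
          conv_rhs => rw [show m = (m - p) + p by omega]
          rw [Nat.add_mod_right]
        rw [h1, Function.iterate_add, hpN, ← Function.iterate_add, ← h2,
          ih (m - p) (by omega), h3]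
  have hpN0 : N % p = 0 := by
    by_contra h
    have h1 : f^[N + N % p] = f^[N] := by rw [← hred N, hNN]
    exact hpmin (N % p) (by omega) (Nat.mod_lt _ (by omega)) h1
  have hp2 : 2 ≤ p := by
    by_contra h
    have hp1' : p = 1 := by omega
    have hconst : ∀ m, f^[N + m] = f^[N] := by
      intro m
      rw [hred m, hp1', Nat.mod_one, Nat.add_zero]
    have hck : ∀ c, f^[c * k] t = t := by
      intro c
      induction c with
      | zero => simp
      | succ c ih =>
        have : (c + 1) * k = c * k + k := by ring
        rw [this, Function.iterate_add_apply, htk, ih]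
    have hNk : f^[N] t = t := by
      have hNk' : N ≤ N * k := Nat.le_mul_of_pos_right N (by omega)
      have h1 : N * k = N + (N * k - N) := by omega
      have := hck N
      rwa [h1, hconst (N * k - N)] at this
    have : f t = t := by
      have h1 : f^[N + 1] t = f (f^[N] t) := by
        rw [Nat.add_comm, Function.iterate_add_apply, Function.iterate_one]
      rw [hNk] at h1
      rw [← h1, hconst 1, hNk]
    exact ht this
  haveI : NeZero p := ⟨by omega⟩
  haveI : Fact (1 < p) := ⟨by omega⟩
  refine ⟨Multiplicative (ZMod p), inferInstance, inferInstance, 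
    fun x => f^[N + (Multiplicative.toAdd x).val], ?_, ?_, ?_⟩
  · -- injectivity
    have hdist : ∀ a b : ℕ, a < b → b < p → f^[N + a] ≠ f^[N + b] := by
      intro a b hab hbp heq
      set c := a + p - b with hc
      have hc1 : 1 ≤ c := by omega
      have hcp : c < p := by omega
      apply hpmin c hc1 hcp
      have h1 : N + c = (p - b) + (N + a) := by omega
      have h2 : (p - b) + (N + b) = N + p := by omega
      rw [h1, Function.iterate_add, heq, ← Function.iterate_add, h2, hpN]
    intro x y h
    have hvx := ZMod.val_lt (Multiplicative.toAdd x)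
    have hvy := ZMod.val_lt (Multiplicative.toAdd y)
    have hval : (Multiplicative.toAdd x).val = (Multiplicative.toAdd y).val := by
      rcases Nat.lt_trichotomy (Multiplicative.toAdd x).val (Multiplicative.toAdd y).val
        with h' | h' | h'
      · exact absurd h (hdist _ _ h' hvy)
      · exact h'
      · exact absurd h.symm (hdist _ _ h' hvx)
    exact Multiplicative.toAdd.injective (ZMod.val_injective p hval)
  · -- homomorphism
    intro x y
    show f^[N + (Multiplicative.toAdd (x * y)).val]
        = f^[N + (Multiplicative.toAdd x).val] ∘ f^[N + (Multiplicative.toAdd y).val]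
    have hxy : (Multiplicative.toAdd (x * y)).val
        = ((Multiplicative.toAdd x).val + (Multiplicative.toAdd y).val) % p := by
      rw [toAdd_mul, ZMod.val_add]
    have key : ∀ a b : ℕ, f^[N + (a + b) % p] = f^[N + a] ∘ f^[N + b] := by
      intro a b
      rw [← Function.iterate_add]
      have h1 : (N + a) + (N + b) = N + (N + (a + b)) := by omega
      rw [h1, hred (N + (a + b))]
      have h2 : (N + (a + b)) % p = (a + b) % p := by
        conv_lhs => rw [Nat.add_mod, hpN0, Nat.zero_add, Nat.mod_mod_of_dvd _ dvd_rfl]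
      rw [h2]
    rw [hxy]
    exact key _ _
  · -- words
    intro x
    exact ⟨wpow u (N + (Multiplicative.toAdd x).val), by rw [minDelta_wpow]⟩
end Main

section Main2
set_option linter.unusedSectionVars false
variable {Q A : Type} [Fintype Q] [Fintype A] (δ : Q → A → Q) (q0 : Q) (F : Set Q)

theorem stmt0_mp
    (h : ∃ (H : Type) (_ : Group H), Nontrivial H ∧
      ∃ φ : H → (MinState δ q0 F → MinState δ q0 F),
        Function.Injective φ ∧
        (∀ g h : H, φ (g * h) = φ g ∘ φ h) ∧
        (∀ g : H, ∃ w : List A, φ g = minDelta δ q0 F w)) :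
    (∃ (u : List A) (q : Q) (k : ℕ),
      Reach δ q0 q ∧ 1 ≤ k ∧ k ≤ Fintype.card Q ∧
      ¬ StEq δ F q (run δ u q) ∧ run δ (wpow u k) q = q) := by
  classical
  obtain ⟨H, instG, ntH, φ, hinj, hhom, hword⟩ := h
  haveI : Finite H := Finite.of_injective φ hinj
  obtain ⟨g, hg⟩ := exists_ne (1 : H)
  set a := φ g with ha
  set e := φ 1 with he
  have hae : a ∘ e = a := by rw [ha, he, ← hhom, mul_one]
  have hphipow : ∀ m : ℕ, φ (g ^ m) = a^[m] ∘ e := by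
    intro m
    induction m with
    | zero => rw [pow_zero, Function.iterate_zero, Function.id_comp, he]
    | succ m ih =>
      rw [pow_succ', hhom, ih, Function.iterate_succ', Function.comp_assoc, ha]
  set n := Nat.card H with hn
  have hn1 : 1 ≤ n := Nat.card_pos
  have hgn : g ^ n = 1 := pow_card_eq_one'
  have hene : a^[n] ∘ e = e := by rw [← hphipow, hgn, he]
  have hane : a ≠ e := fun hh => hg (hinj (by rw [← ha, ← he, hh]))
  -- find a periodic point moved by a
  have hext : ∃ t, a t ≠ t ∧ a^[n] t = t := by
    by_contra hcon
    push_neg at hcon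
    apply hane
    funext s
    have h1 : a^[n] (e s) = e s := congrFun hene s
    by_cases h2 : a (e s) = e s
    · calc a s = (a ∘ e) s := (congrFun hae s).symm
        _ = e s := h2
    · exact absurd h1 (hcon (e s) h2)
  obtain ⟨t, hat, hant⟩ := hext
  obtain ⟨u, hu⟩ := hword g
  obtain ⟨⟨q, hq⟩, rfl⟩ := t.exists_rep
  rw [← ha] at hu
  have hneq : ¬ StEq δ F q (run δ u q) := by
    intro hs
    apply hat
    rw [hu, minDelta_mk, mk_eq_iff]
    exact stEq_symm δ F hs
  have hper : StEq δ F q (run δ (wpow u n) q) := by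
    have h1 : a^[n] = minDelta δ q0 F (wpow u n) := by rw [minDelta_wpow, hu]
    rw [h1, minDelta_mk, mk_eq_iff] at hant
    exact stEq_symm δ F hant
  -- switch to iterates of gq on Q
  set gq : Q → Q := run δ u with hgq
  have hrw : ∀ m x, run δ (wpow u m) x = gq^[m] x := fun m x => run_wpow δ u m x
  have hper' : StEq δ F q (gq^[n] q) := by rwa [hrw] at hper
  have hmulper : ∀ c : ℕ, StEq δ F q (gq^[c * n] q) := by
    intro c
    induction c with
    | zero => rw [Nat.zero_mul]; intro w; rfl
    | succ c ih =>
      have h1 : (c + 1) * n = c * n + n := by ring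
      have h2 : StEq δ F (run δ (wpow u (c * n)) q) (run δ (wpow u (c * n)) (gq^[n] q)) :=
        stEq_run δ F hper' (wpow u (c * n))
      rw [hrw, hrw] at h2
      refine stEq_trans δ F ih (stEq_trans δ F h2 ?_)
      rw [h1, Function.iterate_add_apply]
      intro w; rfl
  -- pigeonhole on Q
  obtain ⟨x, y, hxy, hxyeq⟩ := Fintype.exists_ne_map_eq_of_card_lt
    (fun j : Fin (Fintype.card Q + 1) => gq^[j.1 * n] q) (by simp)
  obtain ⟨s, tt, hst, hstQ, hsteq⟩ : ∃ s tt : ℕ, s < tt ∧ tt ≤ Fintype.card Q ∧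
      gq^[s * n] q = gq^[tt * n] q := by
    rcases (Fin.val_ne_iff.mpr hxy).lt_or_gt with h | h
    · exact ⟨x.1, y.1, h, by omega, hxyeq⟩
    · exact ⟨y.1, x.1, h, by omega, hxyeq.symm⟩
  set q' : Q := gq^[s * n] q with hq'
  have hq'reach : Reach δ q0 q' := by
    rw [hq', ← hrw]
    exact reach_run δ q0 q hq _
  have hq'per : gq^[(tt - s) * n] q' = q' := by
    rw [hq', ← Function.iterate_add_apply]
    have h1 : (tt - s) * n + s * n = tt * n := by
      rw [← Nat.add_mul, Nat.sub_add_cancel (le_of_lt hst)]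
    rw [h1, ← hsteq]
  have hm1 : 1 ≤ (tt - s) * n := by
    have : 1 ≤ tt - s := by omega
    exact Nat.one_le_iff_ne_zero.mpr (by positivity)
  have hq'eq : StEq δ F q q' := hmulper s
  have hq'ne : ¬ StEq δ F q' (run δ u q') := by
    intro hs
    apply hneq
    refine stEq_trans δ F hq'eq (stEq_trans δ F hs ?_)
    exact stEq_symm δ F (stEq_run δ F hq'eq u)
  -- minimal period of q'
  have hPex : ∃ d, 1 ≤ d ∧ gq^[d] q' = q' := ⟨(tt - s) * n, hm1, hq'per⟩
  set d := Nat.find hPex with hd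
  obtain ⟨hd1, hdfix⟩ := Nat.find_spec hPex
  have hdmin : ∀ c, 1 ≤ c → c < d → gq^[c] q' ≠ q' :=
    fun c hc1 hcd hc => Nat.find_min hPex hcd ⟨hc1, hc⟩
  have hdle : d ≤ Fintype.card Q := by
    have hinj2 : Function.Injective (fun j : Fin d => gq^[j.1] q') := by
      intro j1 j2 hj
      simp only at hj
      by_contra hne2
      obtain ⟨b1, b2, hb12, hb2d, hbeq⟩ : ∃ b1 b2 : ℕ, b1 < b2 ∧ b2 < d ∧
          gq^[b1] q' = gq^[b2] q' := by
        rcases (Fin.val_ne_iff.mpr hne2).lt_or_gt with h | h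
        · exact ⟨j1.1, j2.1, h, j2.2, hj⟩
        · exact ⟨j2.1, j1.1, h, j1.2, hj.symm⟩
      apply hdmin (d - b2 + b1) (by omega) (by omega)
      have hstep3 : d - b2 + b2 = d := by omega
      calc gq^[d - b2 + b1] q' = gq^[d - b2] (gq^[b1] q') :=
            Function.iterate_add_apply gq (d - b2) b1 q'
        _ = gq^[d - b2] (gq^[b2] q') := by rw [hbeq]
        _ = gq^[d - b2 + b2] q' := (Function.iterate_add_apply gq (d - b2) b2 q').symm
        _ = gq^[d] q' := by rw [hstep3]
        _ = q' := hdfix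
    calc d = Fintype.card (Fin d) := (Fintype.card_fin d).symm
      _ ≤ Fintype.card Q := Fintype.card_le_of_injective _ hinj2
  exact ⟨u, q', d, hq'reach, hd1, hdle, hq'ne, by rw [hrw]; exact hdfix⟩

end Main2


theorem stmt0_final {Q A : Type} [Fintype Q] [Fintype A]
    (δ : Q → A → Q) (q0 : Q) (F : Set Q) :
    (∃ (H : Type) (_ : Group H), Nontrivial H ∧
      ∃ φ : H → (MinState δ q0 F → MinState δ q0 F),
        Function.Injective φ ∧
        (∀ g h : H, φ (g * h) = φ g ∘ φ h) ∧
        (∀ g : H, ∃ w : List A, φ g = minDelta δ q0 F w)) ↔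
    (∃ (u : List A) (q : Q) (k : ℕ),
      Reach δ q0 q ∧ 1 ≤ k ∧ k ≤ Fintype.card Q ∧
      ¬ StEq δ F q (run δ u q) ∧ run δ (wpow u k) q = q) := by
  constructor
  · exact stmt0_mp δ q0 F
  · rintro ⟨u, q, k, hq, hk1, _, hne, hfix⟩
    exact stmt0_mpr δ q0 F u q k hq hk1 hne hfix

/-- The transition monoid `M(Ã) = {δ̃_w : w ∈ Σ*}` of the minimal DFA `Ã`
of a DFA `𝔄 = (Q, Σ, δ, q₀, F)` contains a nontrivial group (a subset closed under
composition forming a group, here presented as the image of an injective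
multiplication-preserving map from an abstract nontrivial group `H`) iff there exist a word
`u ∈ Σ*`, a reachable state `q`, and `1 ≤ k ≤ |Q|` with `q ≁ δ_u(q)` and `δ_{u^k}(q) = q`. -/
theorem stmt0 {Q A : Type} [Fintype Q] [Fintype A]
    (δ : Q → A → Q) (q0 : Q) (F : Set Q) :
    (∃ (H : Type) (_ : Group H), Nontrivial H ∧
      ∃ φ : H → (MinState δ q0 F → MinState δ q0 F),
        Function.Injective φ ∧
        (∀ g h : H, φ (g * h) = φ g ∘ φ h) ∧
        (∀ g : H, ∃ w : List A, φ g = minDelta δ q0 F w)) ↔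
    (∃ (u : List A) (q : Q) (k : ℕ),
      Reach δ q0 q ∧ 1 ≤ k ∧ k ≤ Fintype.card Q ∧
      ¬ StEq δ F q (run δ u q) ∧ run δ (wpow u k) q = q) := by
  exact stmt0_final δ q0 F
end

section
/- Let Q be a finite nonempty set and let 𝔊 be a monoid of functions Q → Q under composition, i.e., a set G of functions Q → Q closed under composition and containing an element e that satisfies e ∘ δ = δ ∘ e = δ for all δ ∈ G. Let S = {q ∈ Q : e(q) = q}. Then 𝔊 is a group if and only if for every δ ∈ G, the restriction δ↾S of δ to S is a permutation of S (note that e ∘ δ = δ guarantees δ(Q) ⊆ S, so δ↾S maps S into S). -/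
/-- Let `G` be a monoid of functions `Q → Q` under composition on a
finite nonempty set `Q` (closed under composition, with an identity element `e`
satisfying `e ∘ δ = δ ∘ e = δ` for all `δ ∈ G`; `e` need not be the identity function).
Let `S = {q : e q = q}`. Then `G` is a group (every element has a two-sided inverse
w.r.t. `e`) iff for every `δ ∈ G` the restriction of `δ` to `S` is a permutation of `S`. -/
theorem stmt8 {Q : Type} [Fintype Q] [Nonempty Q]
    (G : Set (Q → Q)) (e : Q → Q)
    (hcomp : ∀ f ∈ G, ∀ g ∈ G, f ∘ g ∈ G) (he : e ∈ G)
    (hid : ∀ f ∈ G, e ∘ f = f ∧ f ∘ e = f) :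
    (∀ f ∈ G, ∃ g ∈ G, f ∘ g = e ∧ g ∘ f = e) ↔
    (∀ f ∈ G, Set.BijOn f {q : Q | e q = q} {q : Q | e q = q}) := by
  have heS : ∀ q : Q, e (e q) = e q := fun q => congrFun (hid e he).1 q
  constructor
  · intro h f hf
    obtain ⟨g, hg, hfg, hgf⟩ := h f hf
    refine ⟨?_, ?_, ?_⟩
    · intro q _
      exact congrFun (hid f hf).1 q
    · intro a ha b hb hab
      have h1 := congrFun hgf a
      have h2 := congrFun hgf b
      simp only [Function.comp_apply] at h1 h2
      calc a = e a := ha.symm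
        _ = g (f a) := h1.symm
        _ = g (f b) := by rw [hab]
        _ = e b := h2
        _ = b := hb
    · intro s hs
      have hgs : e (g s) = g s := congrFun (hid g hg).1 s
      have : f (g s) = s := by
        have := congrFun hfg s
        simp only [Function.comp_apply] at this
        rw [this]; exact hs
      exact ⟨g s, hgs, this⟩
  · intro h f hf
    -- iterates of f (positive ones) are in G
    have hiter : ∀ k : ℕ, f^[k+1] ∈ G := by
      intro k
      induction k with
      | zero => simpa using hf
      | succ n ih =>
        have := hcomp f hf _ ih
        rwa [← Function.iterate_succ'] at this
    -- pigeonhole: two iterates coincide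
    obtain ⟨a, b, hab, hEq⟩ :=
      Finite.exists_ne_map_eq_of_infinite (fun k : ℕ => f^[k+1])
    wlog hlt : a < b generalizing a b
    · exact this b a hab.symm hEq.symm (by omega)
    set n : ℕ := b - a with hn
    have hn1 : 1 ≤ n := by omega
    -- f^[n] fixes S pointwise
    have hfix : ∀ s : Q, e s = s → f^[n] s = s := by
      intro s hs
      obtain ⟨t, ht, hts⟩ := (h _ (hiter a)).2.2 hs
      simp only [Set.mem_setOf_eq] at ht hts
      calc f^[n] s = f^[n] (f^[a+1] t) := by rw [hts]
        _ = f^[n + (a+1)] t := (Function.iterate_add_apply f n (a+1) t).symm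
        _ = f^[b+1] t := by congr 1; omega
        _ = f^[a+1] t := (congrFun hEq.symm t)
        _ = s := hts
    -- f^[n] = e
    obtain ⟨m, hm⟩ : ∃ m, n = m + 1 := ⟨n - 1, by omega⟩
    rw [hm] at hfix
    have hfe : f^[m+1] = e := by
      funext q
      have hfeq : f (e q) = f q := congrFun (hid f hf).2 q
      calc f^[m+1] q = f^[m] (f q) := Function.iterate_succ_apply f m q
        _ = f^[m] (f (e q)) := by rw [hfeq]
        _ = f^[m+1] (e q) := (Function.iterate_succ_apply f m (e q)).symm
        _ = e q := hfix (e q) (heS q)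
    -- g = f^[2m+1]
    refine ⟨f^[2*m+1], hiter (2*m), ?_, ?_⟩
    · funext q
      have : (f ∘ f^[2*m+1]) q = f^[(m+1)+(m+1)] q := by
        simp only [Function.comp_apply]
        rw [← Function.iterate_succ_apply' f (2*m+1) q]
        congr 1; omega
      rw [this, Function.iterate_add_apply, hfe, heS]
    · funext q
      have : (f^[2*m+1] ∘ f) q = f^[(m+1)+(m+1)] q := by
        simp only [Function.comp_apply]
        rw [← Function.iterate_succ_apply f (2*m+1) q]
        congr 1; omega
      rw [this, Function.iterate_add_apply, hfe, heS]
end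

section
/- Let Q be a finite nonempty set and let 𝔊 be a group of functions Q → Q under composition (a set G closed under composition forming a group, with identity element e that need not be the identity function on Q). If f ∈ G is not equal to the identity element e of 𝔊, then there exists p ∈ Q such that f^n(p) ≠ f^{n+1}(p) for every n ≥ 1. -/
/-! If every point reached a fixed point of `f` after finitely many steps, then, `Q` being finite,
some power `f^N` with `N ≥ 1` would satisfy `f^N ∘ f = f^N`; cancelling `f^N` in the group gives
`f = e`. -/

namespace Function

theorem iterate_eq_of_isFixedPt_iterate {α : Type*} {f : α → α} {p : α} {n m : ℕ}
    (h : IsFixedPt f (f^[n] p)) (hnm : n ≤ m) : f^[m] p = f^[n] p := by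
  obtain ⟨k, rfl⟩ := Nat.exists_eq_add_of_le hnm
  rw [add_comm, iterate_add_apply, h.iterate k]

theorem exists_iterate_succ_eq_iterate_of_finite {α : Type*} [Finite α] {f : α → α}
    (h : ∀ p, ∃ n, f^[n] p = f^[n + 1] p) : ∃ N, ∀ m, N ≤ m → f^[m + 1] = f^[m] := by
  choose n hn using h
  obtain ⟨N, hN⟩ := (Set.finite_range n).bddAbove
  refine ⟨N, fun m hm => funext fun p => ?_⟩
  have hfix : IsFixedPt f (f^[n p] p) := by
    rw [IsFixedPt, ← iterate_succ_apply' f, ← hn p]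
  have hle : n p ≤ m := (hN ⟨p, rfl⟩).trans hm
  rw [iterate_eq_of_isFixedPt_iterate hfix (hle.trans m.le_succ),
    iterate_eq_of_isFixedPt_iterate hfix hle]

end Function

theorem Set.iterate_succ_mem_of_comp_mem {α : Type*} {G : Set (α → α)}
    (hcomp : ∀ f ∈ G, ∀ g ∈ G, f ∘ g ∈ G) {f : α → α} (hf : f ∈ G) (n : ℕ) :
    f^[n + 1] ∈ G := by
  induction n with
  | zero => simpa using hf
  | succ k ih => rw [Function.iterate_succ']; exact hcomp f hf _ ih

theorem stmt10_general {Q : Type} [Fintype Q]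
    (G : Set (Q → Q)) (e : Q → Q)
    (hcomp : ∀ f ∈ G, ∀ g ∈ G, f ∘ g ∈ G)
    (hid : ∀ f ∈ G, e ∘ f = f ∧ f ∘ e = f)
    (hinv : ∀ f ∈ G, ∃ g ∈ G, f ∘ g = e ∧ g ∘ f = e)
    (f : Q → Q) (hf : f ∈ G) (hne : f ≠ e) :
    ∃ p : Q, ∀ n : ℕ, 1 ≤ n → f^[n] p ≠ f^[n + 1] p := by
  by_contra! h
  obtain ⟨N, hN⟩ := Function.exists_iterate_succ_eq_iterate_of_finite fun p =>
    let ⟨n, _, hn⟩ := h p; ⟨n, hn⟩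
  obtain ⟨g, -, -, hg⟩ := hinv _ (Set.iterate_succ_mem_of_comp_mem hcomp hf N)
  apply hne
  calc f = e ∘ f := ((hid f hf).1).symm
    _ = g ∘ f^[N + 1 + 1] := by rw [← hg, Function.comp_assoc, ← Function.iterate_succ]
    _ = e := by rw [hN _ N.le_succ, hg]

/-- Let `G` be a group of functions `Q → Q` under composition on a
finite nonempty set `Q`, with identity element `e` (not necessarily the identity
function). If `f ∈ G` and `f ≠ e`, then there is `p ∈ Q` such that `f^n(p) ≠ f^{n+1}(p)`
for every `n ≥ 1`. -/
theorem stmt10 {Q : Type} [Fintype Q] [Nonempty Q]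
    (G : Set (Q → Q)) (e : Q → Q)
    (hcomp : ∀ f ∈ G, ∀ g ∈ G, f ∘ g ∈ G) (he : e ∈ G)
    (hid : ∀ f ∈ G, e ∘ f = f ∧ f ∘ e = f)
    (hinv : ∀ f ∈ G, ∃ g ∈ G, f ∘ g = e ∧ g ∘ f = e)
    (f : Q → Q) (hf : f ∈ G) (hne : f ≠ e) :
    ∃ p : Q, ∀ n : ℕ, 1 ≤ n → f^[n] p ≠ f^[n + 1] p :=
  stmt10_general G e hcomp hid hinv f hf hne
end

section
/- Let S be a finite nonempty set and let α and β be permutations of S such that the order of α is 2, the order of β is an odd prime k, and the order l of the composite β ∘ α is greater than 1 and coprime to both 2 and k. Then there exists q ∈ S such that α(q) ≠ q, β(q) ≠ q, and (β ∘ α)(q) ≠ q. -/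
private lemma perm_fix_of_coprime {S : Type} (f : Equiv.Perm S) (m n : ℕ) (q : S)
    (hm : (f ^ m) q = q) (hn : (f ^ n) q = q) (h : Nat.Coprime m n) : f q = q := by
  have hm' : Function.IsPeriodicPt f m q := by
    simpa [Function.IsPeriodicPt, Function.IsFixedPt, ← Equiv.Perm.coe_pow] using hm
  have hn' : Function.IsPeriodicPt f n q := by
    simpa [Function.IsPeriodicPt, Function.IsFixedPt, ← Equiv.Perm.coe_pow] using hn
  have hd : Function.minimalPeriod f q ∣ 1 := by
    have := Nat.dvd_gcd hm'.minimalPeriod_dvd hn'.minimalPeriod_dvd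
    rwa [h] at this
  have h1 : Function.minimalPeriod f q = 1 := Nat.eq_one_of_dvd_one hd
  have := Function.isPeriodicPt_minimalPeriod f q
  rw [h1] at this
  simpa [Function.IsPeriodicPt, Function.IsFixedPt] using this

/-- Let `α, β` be permutations of a finite nonempty set `S` such that
`α` has order `2`, `β` has order an odd prime `k`, and the order `l` of `β ∘ α` is
greater than `1` and coprime to both `2` and `k`. Then there is `q ∈ S` with `α q ≠ q`,
`β q ≠ q`, and `β (α q) ≠ q`. (In `Equiv.Perm`, `(β * α) q = β (α q)`.) -/
theorem stmt11 {S : Type} [Fintype S] [Nonempty S]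
    (α β : Equiv.Perm S) (k l : ℕ)
    (hk : Nat.Prime k) (hkodd : Odd k)
    (hα : orderOf α = 2) (hβ : orderOf β = k)
    (hl : orderOf (β * α) = l) (hl1 : 1 < l)
    (hl2 : Nat.Coprime l 2) (hlk : Nat.Coprime l k) :
    ∃ q : S, α q ≠ q ∧ β q ≠ q ∧ (β * α) q ≠ q := by
  by_contra hcon
  push_neg at hcon
  set γ : Equiv.Perm S := β * α with hγ
  -- γ^l = 1, β^k = 1, α^2 = 1
  have hγl : γ ^ l = 1 := by rw [← hl]; exact pow_orderOf_eq_one γ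
  have hβk : β ^ k = 1 := by rw [← hβ]; exact pow_orderOf_eq_one β
  have hα2 : ∀ x, α (α x) = x := by
    intro x
    have h2 : α ^ 2 = 1 := by rw [← hα]; exact pow_orderOf_eq_one α
    have := DFunLike.congr_fun h2 x
    simpa [pow_succ, Equiv.Perm.mul_apply] using this
  -- key dichotomy: every moved point of γ is fixed by α or β
  have hkey : ∀ x, γ x ≠ x → α x = x ∨ β x = x := by
    intro x hx
    by_cases ha : α x = x
    · exact Or.inl ha
    · by_cases hb : β x = x
      · exact Or.inr hb
      · exact absurd (hcon x ha hb) hx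
  -- Case A: a point fixed by α but moved by γ gives a contradiction
  have caseA : ∀ q : S, α q = q → γ q ≠ q → False := by
    intro q hq hγq
    have claim : ∀ n : ℕ, (γ ^ n) q = (β ^ n) q ∧ α ((γ ^ n) q) = (γ ^ n) q := by
      intro n
      induction n with
      | zero => simpa using hq
      | succ n ih =>
        obtain ⟨ih1, ih2⟩ := ih
        set x := (γ ^ n) q with hx
        have e1 : (γ ^ n) (γ q) = γ x := by
          rw [← Equiv.Perm.mul_apply, ← pow_succ, pow_succ', Equiv.Perm.mul_apply]
        have happ : (γ ^ (n + 1)) q = γ x := by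
          rw [pow_succ', Equiv.Perm.mul_apply]
        have hγx : γ x = β x := by
          rw [hγ, Equiv.Perm.mul_apply, ih2]
        have hmove : γ x ≠ x := by
          intro h
          exact hγq ((γ ^ n).injective (by rw [e1, h, hx]))
        have hβx : β x ≠ x := by rwa [hγx] at hmove
        have step1 : (γ ^ (n + 1)) q = (β ^ (n + 1)) q := by
          rw [happ, hγx, pow_succ', Equiv.Perm.mul_apply, ih1]
        refine ⟨step1, ?_⟩
        rw [happ]
        have hmove2 : γ (γ x) ≠ γ x := fun h => hmove (γ.injective h)
        rcases hkey (γ x) hmove2 with h | h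
        · exact h
        · exfalso
          rw [hγx] at h
          exact hβx (β.injective h)
    have hβl : (β ^ l) q = q := by
      rw [← (claim l).1, hγl]; rfl
    have hβk' : (β ^ k) q = q := by rw [hβk]; rfl
    have : β q = q := perm_fix_of_coprime β l k q hβl hβk' hlk
    have h1 : γ q = β q := by rw [hγ, Equiv.Perm.mul_apply, hq]
    rw [h1] at hγq
    exact hγq this
  -- there is a point moved by γ
  have hγne : γ ≠ 1 := by
    intro h
    rw [h, orderOf_one] at hl
    omega
  obtain ⟨q₀, hq₀⟩ : ∃ q : S, γ q ≠ q := by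
    by_contra h
    push_neg at h
    exact hγne (Equiv.ext h)
  rcases hkey q₀ hq₀ with hA | hB
  · exact caseA q₀ hA hq₀
  -- Case B: q₀ fixed by β
  · have hmove2 : γ (γ q₀) ≠ γ q₀ := fun h => hq₀ (γ.injective h)
    rcases hkey (γ q₀) hmove2 with h | h
    · exact caseA (γ q₀) h hmove2
    · -- β fixes γ q₀ = β (α q₀), so β (α q₀) = α q₀, i.e. γ q₀ = α q₀
      have h1 : γ q₀ = α q₀ := by
        have : β (β (α q₀)) = β (α q₀) := by
          simpa [hγ, Equiv.Perm.mul_apply] using h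
        have := β.injective this
        rw [hγ, Equiv.Perm.mul_apply, this]
      have h2 : (γ ^ 2) q₀ = q₀ := by
        have : γ (γ q₀) = q₀ := by
          rw [h1, hγ, Equiv.Perm.mul_apply, hα2, hB]
        simpa [pow_two, Equiv.Perm.mul_apply] using this
      have hγlq : (γ ^ l) q₀ = q₀ := by rw [hγl]; rfl
      exact hq₀ (perm_fix_of_coprime γ l 2 q₀ hγlq h2 hl2)
end

section
/- Let Q be a finite nonempty set and let f, g : Q → Q be functions. Then there exists a function h in the submonoid M of functions Q → Q generated by {f, g} under composition (with the identity function included) such that h ∘ h = h and, for every x ∈ M and all q, q' ∈ Q, h(q) = h(q') if and only if (x ∘ h)(q) = (x ∘ h)(q'). -/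
/-- Membership in the submonoid of `Q → Q` functions generated by `f` and `g` under
composition (the identity function corresponds to the empty composite). -/
def InGenMonoid {Q : Type} (f g : Q → Q) (x : Q → Q) : Prop :=
  ∃ l : List (Q → Q), (∀ y ∈ l, y = f ∨ y = g) ∧ x = l.foldr (· ∘ ·) id

lemma gen_id {Q : Type} (f g : Q → Q) : InGenMonoid f g id := ⟨[], by simp, rfl⟩

lemma foldr_comp {Q : Type} (l : List (Q → Q)) (c : Q → Q) :
    l.foldr (· ∘ ·) c = l.foldr (· ∘ ·) id ∘ c := by
  induction l with
  | nil => rfl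
  | cons a l ih => simp [List.foldr_cons, ih, Function.comp_assoc]

lemma gen_comp {Q : Type} {f g x y : Q → Q} (hx : InGenMonoid f g x)
    (hy : InGenMonoid f g y) : InGenMonoid f g (x ∘ y) := by
  obtain ⟨l1, hl1, rfl⟩ := hx
  obtain ⟨l2, hl2, rfl⟩ := hy
  refine ⟨l1 ++ l2, ?_, ?_⟩
  · intro z hz; rcases List.mem_append.1 hz with h | h
    · exact hl1 z h
    · exact hl2 z h
  · rw [List.foldr_append]; exact (foldr_comp _ _).symm

lemma gen_iterate {Q : Type} {f g x : Q → Q} (hx : InGenMonoid f g x) (n : ℕ) :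
    InGenMonoid f g (x^[n]) := by
  induction n with
  | zero => exact gen_id f g
  | succ n ih => rw [Function.iterate_succ']; exact gen_comp hx ih

/-- For any functions `f, g` on a finite nonempty set `Q`, the submonoid
`M` of `Q → Q` functions generated by `{f, g}` under composition contains an idempotent
`h` (`h ∘ h = h`) such that for every `x ∈ M`, the fibres of `x ∘ h` coincide with those
of `h`: `h q = h q' ↔ (x ∘ h) q = (x ∘ h) q'` for all `q, q'`. -/
theorem stmt12 {Q : Type} [Fintype Q] [Nonempty Q] (f g : Q → Q) :
    ∃ h : Q → Q, InGenMonoid f g h ∧ h ∘ h = h ∧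
      ∀ x : Q → Q, InGenMonoid f g x →
        ∀ q q' : Q, (h q = h q' ↔ (x ∘ h) q = (x ∘ h) q') := by
  classical
  set rk : (Q → Q) → ℕ := fun x => (Finset.univ.image x).card with hrk
  have hex : ∃ n, ∃ x : Q → Q, InGenMonoid f g x ∧ rk x = n := ⟨_, id, gen_id f g, rfl⟩
  obtain ⟨h0, hh0, hh0rk⟩ := Nat.find_spec hex
  have hmin : ∀ x : Q → Q, InGenMonoid f g x → Nat.find hex ≤ rk x := by
    intro x hx
    by_contra hlt
    exact Nat.find_min hex (lt_of_not_ge hlt) ⟨x, hx, rfl⟩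
  have key : ∀ x y : Q → Q, InGenMonoid f g x → InGenMonoid f g y →
      rk y = Nat.find hex → Set.InjOn x (Finset.univ.image y) := by
    intro x y hx hy hyrk
    have hle : rk (x ∘ y) ≤ rk y := by
      simp only [hrk]
      rw [← Finset.image_image]
      exact Finset.card_image_le
    have h1 : rk (x ∘ y) = rk y :=
      le_antisymm hle (hyrk ▸ hmin _ (gen_comp hx hy))
    have h2 : ((Finset.univ.image y).image x).card = (Finset.univ.image y).card := by
      rw [Finset.image_image]; exact h1
    exact Finset.injOn_of_card_image_eq h2
  set T : Finset Q := Finset.univ.image h0 with hT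
  have hinj : Set.InjOn h0 T := key h0 h0 hh0 hh0 hh0rk
  have hmaps : ∀ q, h0 q ∈ T := fun q => Finset.mem_image.2 ⟨q, Finset.mem_univ q, rfl⟩
  have hiter : ∀ n : ℕ, (∀ q ∈ T, h0^[n] q ∈ T) ∧ Set.InjOn (h0^[n]) T := by
    intro n
    induction n with
    | zero => exact ⟨fun q hq => hq, fun a _ b _ e => e⟩
    | succ n ih =>
      refine ⟨fun q hq => ?_, fun a ha b hb e => ?_⟩
      · rw [Function.iterate_succ']; exact hmaps _
      · rw [Function.iterate_succ'] at e
        exact ih.2 ha hb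
          (hinj (Finset.mem_coe.2 (ih.1 a ha)) (Finset.mem_coe.2 (ih.1 b hb)) e)
  have pig : ∃ i j : ℕ, i < j ∧ ∀ y ∈ T, h0^[i] y = h0^[j] y := by
    obtain ⟨i, j, hij, he⟩ :=
      Finite.exists_ne_map_eq_of_infinite (fun n : ℕ => (fun y : T => h0^[n] y))
    rcases lt_or_gt_of_ne hij with hlt | hlt
    · exact ⟨i, j, hlt, fun y hy => congrFun he ⟨y, hy⟩⟩
    · exact ⟨j, i, hlt, fun y hy => (congrFun he ⟨y, hy⟩).symm⟩
  obtain ⟨i, j, hij, he⟩ := pig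
  set n : ℕ := j - i with hn
  have hn1 : 1 ≤ n := by omega
  have hfix : ∀ y ∈ T, h0^[n] y = y := by
    intro y hy
    have hadd : h0^[i] (h0^[n] y) = h0^[i] y := by
      rw [← Function.iterate_add_apply, Nat.add_sub_cancel' (le_of_lt hij)]
      exact (he y hy).symm
    exact (hiter i).2 (Finset.mem_coe.2 ((hiter n).1 y hy)) (Finset.mem_coe.2 hy) hadd
  set h : Q → Q := h0^[n] with hh
  have hmem : InGenMonoid f g h := gen_iterate hh0 n
  have hmemT : ∀ q, h q ∈ T := by
    intro q
    obtain ⟨m, hm⟩ := Nat.exists_eq_add_of_le hn1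
    rw [hh, hm, Function.iterate_add_apply]
    exact hmaps _
  have hidem : h ∘ h = h := by
    funext q
    exact hfix _ (hmemT q)
  have himage : Finset.univ.image h ⊆ T := by
    intro y hy
    obtain ⟨q, _, rfl⟩ := Finset.mem_image.1 hy
    exact hmemT q
  have hrkh : rk h = Nat.find hex := by
    refine le_antisymm ?_ (hmin _ hmem)
    calc rk h ≤ T.card := Finset.card_le_card himage
    _ = Nat.find hex := hh0rk
  refine ⟨h, hmem, hidem, fun x hx q q' => ?_⟩
  constructor
  · intro e; simp only [Function.comp_apply, e]
  · intro e
    have hinjx : Set.InjOn x (Finset.univ.image h) := key x h hx hmem hrkh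
    exact hinjx (Finset.mem_coe.2 (Finset.mem_image.2 ⟨q, Finset.mem_univ q, rfl⟩))
      (Finset.mem_coe.2 (Finset.mem_image.2 ⟨q', Finset.mem_univ q', rfl⟩)) e
end
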